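/- arXiv:2501.11383 — 5 statements merged into one kernel-verified Lean document; each statement's English description precedes it below -/
import Mathlib

section
/- Let G and H be multigraphs, e1,e2 parallel non-loop edges of G, and f1,f2 parallel non-loop edges of H, such that both G\{e1,e2} and H\{f1,f2} are connected. Then any two of the following three equalities imply the third: T_{G\{e1,e2}} = T_{H\{f1,f2}}, T_{G\e1} = T_{H\f1}, and T_G = T_H. -/
open scoped BigOperators
open MvPolynomial

attribute [local instance] Classical.propDecidable

/-- A multigraph: finite vertex and edge types, each edge has an unordered
pair of endpoints (loops and parallel edges allowed). -/
structure Multigraph where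
  V : Type
  E : Type
  [fintypeV : Fintype V]
  [fintypeE : Fintype E]
  [decEqV : DecidableEq V]
  [decEqE : DecidableEq E]
  ends : E → Sym2 V

attribute [instance] Multigraph.fintypeV Multigraph.fintypeE
  Multigraph.decEqV Multigraph.decEqE

noncomputable instance quotSetoidFintype {α : Type} [Fintype α] (s : Setoid α) :
    Fintype (Quotient s) := by classical exact Quotient.fintype s

noncomputable instance connCompFintype {α : Type} [Fintype α] (G : SimpleGraph α) :
    Fintype G.ConnectedComponent := by
  classical exact Fintype.ofSurjective G.connectedComponentMk fun c => c.exists_rep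

namespace Multigraph

variable (G : Multigraph)

/-- The simple graph induced by a set of edges `A` (parallel edges and loops
do not affect connectivity). -/
def spanning (A : Finset G.E) : SimpleGraph G.V :=
  SimpleGraph.fromRel (fun a b => ∃ e ∈ A, G.ends e = s(a, b))

/-- number of connected components of the spanning subgraph `(V, A)` -/
noncomputable def comps (A : Finset G.E) : ℕ :=
  Nat.card (G.spanning A).ConnectedComponent

/-- rank of an edge subset: `|V| - c(A)` -/
noncomputable def rk (A : Finset G.E) : ℕ :=
  Fintype.card G.V - G.comps A

/-- The Tutte polynomial, as a polynomial in the variables `X 0 = x`, `X 1 = y`. -/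
noncomputable def tutte : MvPolynomial (Fin 2) ℤ :=
  ∑ A : Finset G.E,
    (X 0 - 1) ^ (G.rk Finset.univ - G.rk A) * (X 1 - 1) ^ (A.card - G.rk A)

def Connected : Prop := (G.spanning Finset.univ).Connected

def IsLoop (e : G.E) : Prop := (G.ends e).IsDiag

def IsBridge (e : G.E) : Prop :=
  G.comps (Finset.univ.erase e) ≠ G.comps Finset.univ

noncomputable def numLoops : ℕ := Nat.card {e : G.E // (G.ends e).IsDiag}

/-- delete a set of edges -/
def deleteSet (F : Finset G.E) : Multigraph where
  V := G.V
  E := {e : G.E // e ∉ F}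
  ends := fun e => G.ends e.1

/-- delete one edge -/
def delete (e : G.E) : Multigraph := G.deleteSet {e}

/-- identify vertices along (the equivalence generated by) a relation `r` -/
noncomputable def identify (r : G.V → G.V → Prop) : Multigraph where
  V := Quotient (Relation.EqvGen.setoid r)
  E := G.E
  decEqV := Classical.decEq _
  ends := fun e => (G.ends e).map (Quotient.mk (Relation.EqvGen.setoid r))

/-- contract an edge: delete it and identify its two endpoints -/
noncomputable def contract (e : G.E) : Multigraph :=
  (G.delete e).identify (fun a b => a ∈ G.ends e ∧ b ∈ G.ends e)

/-- the projection of a vertex of `G` to a vertex of `G/e` -/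
noncomputable def cmk (e : G.E) : G.V → (G.contract e).V := fun v => Quotient.mk _ v

/-- restrict to the edges satisfying `P` (all vertices are kept) -/
noncomputable def edgeRestrict (P : G.E → Prop) : Multigraph where
  V := G.V
  E := {e : G.E // P e}
  ends := fun e => G.ends e.1

/-- add new edges indexed by `n` with prescribed endpoints -/
def addEdges (n : Type) [Fintype n] [DecidableEq n] (f : n → Sym2 G.V) :
    Multigraph where
  V := G.V
  E := G.E ⊕ n
  ends := Sum.elim G.ends f

/-- disjoint union -/
def disjUnion (H : Multigraph) : Multigraph where
  V := G.V ⊕ H.V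
  E := G.E ⊕ H.E
  ends := Sum.elim (fun e => (G.ends e).map Sum.inl) (fun e => (H.ends e).map Sum.inr)

/-- the gluing `G(u_1,…,u_k) ⊔ H(w_1,…,w_k)`: disjoint union with `u i`
identified with `w i` for each `i` -/
noncomputable def glue (H : Multigraph) {k : ℕ} (u : Fin k → G.V) (w : Fin k → H.V) :
    Multigraph :=
  (G.disjUnion H).identify
    (fun a b => ∃ i : Fin k, a = Sum.inl (u i) ∧ b = Sum.inr (w i))

/-- projection from `G.V ⊕ H.V` to the vertices of the gluing -/
noncomputable def glueMk (H : Multigraph) {k : ℕ} (u : Fin k → G.V) (w : Fin k → H.V) :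
    G.V ⊕ H.V → (G.glue H u w).V := fun a => Quotient.mk _ a

end Multigraph

/-- `σ` is an isomorphism of multigraphs: a vertex bijection preserving
edge multiplicities between every pair of vertices. -/
def Multigraph.IsIsoMap (G H : Multigraph) (σ : G.V ≃ H.V) : Prop :=
  ∀ p : Sym2 G.V,
    Nat.card {e : G.E // G.ends e = p} = Nat.card {e : H.E // H.ends e = p.map σ}

/-- `G` and `H` are isomorphic multigraphs -/
def Multigraph.Iso (G H : Multigraph) : Prop := ∃ σ : G.V ≃ H.V, G.IsIsoMap H σ

/-- `σ` is an automorphism of `G` -/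
def Multigraph.IsAuto (G : Multigraph) (σ : G.V ≃ G.V) : Prop := G.IsIsoMap G σ

/-- `Q` is a partition of the type `α` -/
def IsPartitionUniv {α : Type} (Q : Finset (Finset α)) : Prop :=
  (∀ B ∈ Q, B.Nonempty) ∧ ∀ i : α, ∃! B, B ∈ Q ∧ i ∈ B


/-! Let `e₁ ≠ e₂` be parallel edges of `G` whose removal keeps `G` connected, so that
`G`, `G \ e₁` and `G \ {e₁, e₂}` have the same rank. Splitting the subset expansion of each
Tutte polynomial according to `A ∩ {e₁, e₂}` gives
  `T_G + y · T_{G \ {e₁, e₂}} = (y + 1) · T_{G \ e₁}`: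
the sets meeting `{e₁, e₂}` in one edge contribute alike, since parallel edges span the same
graph, and adding `e₁` to a set containing `e₂` keeps its rank and so multiplies its term by
`y - 1`. As `y` and `y + 1` are nonzero in the domain `ℤ[x, y]`, this relation for `G` and for
`H` makes any two of the three equalities imply the third. -/

namespace SimpleGraph

variable {V : Type*} {H : SimpleGraph V} {u v : V}

theorem Reachable.of_sup_edge {a b : V} (h : (H ⊔ edge u v).Reachable a b) :
    H.Reachable a b ∨ (H.Reachable a u ∧ H.Reachable v b) ∨
      (H.Reachable a v ∧ H.Reachable u b) := by
  obtain ⟨p⟩ := h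
  induction p with
  | nil => exact Or.inl .rfl
  | cons hadj _ ih =>
    rw [sup_adj, edge_adj] at hadj
    rcases hadj with hadj | ⟨⟨rfl, rfl⟩ | ⟨rfl, rfl⟩, -⟩
    · have := hadj.reachable
      grind [Reachable.trans]
    · grind [Reachable.refl]
    · grind [Reachable.refl]

/-- Only the component of `u` can merge with another one. -/
theorem card_connectedComponent_le_card_sup_edge_add_one [Finite V] :
    Nat.card H.ConnectedComponent ≤ Nat.card (H ⊔ edge u v).ConnectedComponent + 1 := by
  let φ := ConnectedComponent.map (Hom.ofLE (le_sup_left : H ≤ H ⊔ edge u v))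
  have hinj : Set.InjOn φ {H.connectedComponentMk u}ᶜ := by
    intro c hc d hd hcd
    induction c using ConnectedComponent.ind with | _ a =>
    induction d using ConnectedComponent.ind with | _ b =>
    simp only [Set.mem_compl_iff, Set.mem_singleton_iff, ConnectedComponent.eq] at hc hd
    rcases (ConnectedComponent.exact hcd).of_sup_edge with hab | ⟨hau, -⟩ | ⟨-, hub⟩
    · exact ConnectedComponent.sound hab
    · exact absurd hau hc
    · exact absurd hub.symm hd
  have hcompl := Set.ncard_add_ncard_compl {H.connectedComponentMk u}
  rw [Set.ncard_singleton] at hcompl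
  have := Set.ncard_le_ncard_of_injOn φ (fun _ _ => Set.mem_univ _) hinj
  rw [Set.ncard_univ] at this
  omega

end SimpleGraph

namespace Multigraph

variable {G : Multigraph}

open Finset

theorem spanning_mono {A B : Finset G.E} (h : A ⊆ B) : G.spanning A ≤ G.spanning B := by
  intro a b hab
  simp only [spanning, SimpleGraph.fromRel_adj] at hab ⊢
  grind

theorem spanning_eq_of_image_ends_eq {A B : Finset G.E} (h : A.image G.ends = B.image G.ends) :
    G.spanning A = G.spanning B := by
  have key (p : Sym2 G.V) : (∃ e ∈ A, G.ends e = p) ↔ ∃ e ∈ B, G.ends e = p := by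
    rw [← Finset.mem_image, h, Finset.mem_image]
  simp only [spanning, key]

theorem rk_eq_of_image_ends_eq {A B : Finset G.E} (h : A.image G.ends = B.image G.ends) :
    G.rk A = G.rk B := by
  rw [rk, rk, comps, comps, spanning_eq_of_image_ends_eq h]

theorem spanning_insert_le_sup_edge {e : G.E} {u v : G.V} (he : G.ends e = s(u, v))
    (A : Finset G.E) : G.spanning (insert e A) ≤ G.spanning A ⊔ SimpleGraph.edge u v := by
  intro a b hab
  simp only [spanning, SimpleGraph.fromRel_adj, Finset.mem_insert] at hab
  simp only [SimpleGraph.sup_adj, spanning, SimpleGraph.fromRel_adj, SimpleGraph.edge_adj]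
  grind [Sym2.eq_iff]

theorem comps_le_comps_insert_add_one (e : G.E) (A : Finset G.E) :
    G.comps A ≤ G.comps (insert e A) + 1 := by
  induction he : G.ends e using Sym2.ind with | _ u v =>
  exact SimpleGraph.card_connectedComponent_le_card_sup_edge_add_one.trans
    (Nat.add_le_add_right (SimpleGraph.ConnectedComponent.card_le_card_of_le
      (spanning_insert_le_sup_edge he A)) 1)

theorem card_V_le_comps_add_card (A : Finset G.E) : Fintype.card G.V ≤ G.comps A + A.card := by
  induction A using Finset.induction_on with
  | empty =>
    have hbot : G.spanning ∅ = ⊥ := by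
      ext
      simp [spanning]
    have hinj : Function.Injective (G.spanning ∅).connectedComponentMk := fun a b hab => by
      rw [hbot] at hab
      exact SimpleGraph.reachable_bot.mp (SimpleGraph.ConnectedComponent.exact hab)
    simpa [comps, ← Nat.card_eq_fintype_card] using Nat.card_le_card_of_injective _ hinj
  | insert e A he ih =>
    have := comps_le_comps_insert_add_one e A
    rw [Finset.card_insert_of_notMem he]
    omega

theorem rk_le_card (A : Finset G.E) : G.rk A ≤ A.card := by
  have := card_V_le_comps_add_card A
  rw [rk]
  omega

theorem comps_eq_one_of_connected {A : Finset G.E} (h : (G.spanning A).Connected) :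
    G.comps A = 1 :=
  have := h.nonempty
  Nat.card_eq_one_iff_unique.mpr ⟨h.preconnected.subsingleton_connectedComponent, inferInstance⟩

variable (G) in
def deleteSetEmb (F : Finset G.E) : (G.deleteSet F).E ↪ G.E := Function.Embedding.subtype _

theorem map_univ_deleteSetEmb (F : Finset G.E) : univ.map (G.deleteSetEmb F) = univ \ F := by
  ext e
  simp only [mem_map, mem_univ, true_and, mem_sdiff]
  exact ⟨fun ⟨a, ha⟩ => ha ▸ a.2, fun he => ⟨⟨e, he⟩, rfl⟩⟩

theorem powerset_sdiff_eq_map (F : Finset G.E) :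
    (univ \ F).powerset = (univ : Finset (Finset (G.deleteSet F).E)).map
      (mapEmbedding (G.deleteSetEmb F)).toEmbedding := by
  ext t
  rw [mem_powerset, ← map_univ_deleteSetEmb, subset_map_iff, mem_map]
  simp only [mem_univ, true_and, subset_univ, RelEmbedding.coe_toEmbedding, mapEmbedding_apply,
    eq_comm]

theorem spanning_deleteSet (F : Finset G.E) (A : Finset (G.deleteSet F).E) :
    (G.deleteSet F).spanning A = G.spanning (A.map (G.deleteSetEmb F)) := by
  simp only [spanning, Finset.mem_map, exists_exists_and_eq_and]
  rfl

theorem rk_deleteSet (F : Finset G.E) (A : Finset (G.deleteSet F).E) :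
    (G.deleteSet F).rk A = G.rk (A.map (G.deleteSetEmb F)) := by
  rw [rk, rk, comps, comps, spanning_deleteSet]
  rfl

theorem rk_sdiff_eq_rk_univ_of_connected {F : Finset G.E} (h : (G.deleteSet F).Connected) :
    G.rk (univ \ F) = G.rk univ := by
  have hF : (G.spanning (univ \ F)).Connected := by
    rwa [Connected, spanning_deleteSet, map_univ_deleteSetEmb] at h
  rw [rk, rk, comps_eq_one_of_connected hF,
    comps_eq_one_of_connected (hF.mono (spanning_mono (subset_univ _)))]

/-- `r` stands for the rank of the whole edge set; keeping it a parameter lets the Tutte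
polynomial of `G \ F` be written with ranks taken in `G`. -/
noncomputable def tutteSummand (G : Multigraph) (r : ℕ) (A : Finset G.E) :
    MvPolynomial (Fin 2) ℤ :=
  (X 0 - 1) ^ (r - G.rk A) * (X 1 - 1) ^ (A.card - G.rk A)

theorem tutte_eq_sum_tutteSummand :
    G.tutte = ∑ A ∈ univ.powerset, G.tutteSummand (G.rk univ) A := by
  rw [powerset_univ]
  rfl

theorem tutte_deleteSet (F : Finset G.E) :
    (G.deleteSet F).tutte = ∑ A ∈ (univ \ F).powerset, G.tutteSummand (G.rk (univ \ F)) A := by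
  rw [powerset_sdiff_eq_map, sum_map, tutte]
  refine sum_congr rfl fun A _ => ?_
  rw [RelEmbedding.coe_toEmbedding, mapEmbedding_apply, tutteSummand, rk_deleteSet,
    rk_deleteSet, map_univ_deleteSetEmb, card_map]

theorem tutteSummand_insert_of_rk_eq (r : ℕ) {e : G.E} {A : Finset G.E} (he : e ∉ A)
    (hrk : G.rk (insert e A) = G.rk A) :
    G.tutteSummand r (insert e A) = (X 1 - 1) * G.tutteSummand r A := by
  rw [tutteSummand, tutteSummand, hrk, card_insert_of_notMem he, Nat.sub_add_comm (rk_le_card A),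
    pow_succ]
  ring

theorem tutte_add_X_mul_tutte_deleteSet_pair {e₁ e₂ : G.E} (hne : e₁ ≠ e₂)
    (hends : G.ends e₁ = G.ends e₂) (hrk : G.rk (univ \ {e₁, e₂}) = G.rk univ) :
    G.tutte + X 1 * (G.deleteSet {e₁, e₂}).tutte = (X 1 + 1) * (G.delete e₁).tutte := by
  set s := univ \ {e₁, e₂}
  have he₂ : e₂ ∉ s := by simp [s]
  have he₁ : e₁ ∉ insert e₂ s := by simp [s, hne]
  have huniv : univ = insert e₁ (insert e₂ s) := by
    ext e
    simp only [s, mem_univ, mem_insert, mem_sdiff, mem_singleton, true_and]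
    grind
  have hdel : univ \ {e₁} = insert e₂ s := by
    ext e
    simp only [s, mem_univ, mem_insert, mem_sdiff, mem_singleton, true_and]
    grind
  have hrk₁ : G.rk (univ \ {e₁}) = G.rk univ := by
    refine rk_eq_of_image_ends_eq ?_
    rw [hdel, huniv]
    simp only [image_insert, hends, insert_idem]
  set r := G.rk univ
  have hswap (B : Finset G.E) (hB : B ∈ s.powerset) :
      G.tutteSummand r (insert e₁ B) = G.tutteSummand r (insert e₂ B) := by
    have h₁ : e₁ ∉ B := fun h => he₁ (mem_insert_of_mem (mem_powerset.1 hB h))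
    have h₂ : e₂ ∉ B := fun h => he₂ (mem_powerset.1 hB h)
    have hrk_swap : G.rk (insert e₁ B) = G.rk (insert e₂ B) :=
      rk_eq_of_image_ends_eq (by simp only [image_insert, hends])
    rw [tutteSummand, tutteSummand, hrk_swap, card_insert_of_notMem h₁, card_insert_of_notMem h₂]
  have hboth (B : Finset G.E) (hB : B ∈ s.powerset) :
      G.tutteSummand r (insert e₁ (insert e₂ B)) = (X 1 - 1) * G.tutteSummand r (insert e₂ B) :=
    tutteSummand_insert_of_rk_eq r (fun h => he₁ (insert_subset_insert _ (mem_powerset.1 hB) h))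
      (rk_eq_of_image_ends_eq (by simp only [image_insert, hends, insert_idem]))
  have hpow : (univ : Finset G.E).powerset = (insert e₁ (insert e₂ s)).powerset := by rw [← huniv]
  rw [tutte_eq_sum_tutteSummand, delete, tutte_deleteSet, tutte_deleteSet, hrk, hrk₁, hdel,
    hpow, sum_powerset_insert he₁, sum_powerset_insert he₂, sum_powerset_insert he₂,
    sum_congr rfl hswap, sum_congr rfl hboth, ← mul_sum]
  ring

end Multigraph

theorem two_of_three_of_add_mul_eq_add_one_mul {R : Type*} [CommRing R] [IsDomain R]
    {y a b c a' b' c' : R} (hy : y ≠ 0) (hy₁ : y + 1 ≠ 0)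
    (h : a + y * b = (y + 1) * c) (h' : a' + y * b' = (y + 1) * c') :
    (b = b' → c = c' → a = a') ∧ (b = b' → a = a' → c = c') ∧ (c = c' → a = a' → b = b') := by
  refine ⟨fun hb hc => ?_, fun hb ha => ?_, fun hc ha => ?_⟩
  · linear_combination h - h' + (y + 1) * hc - y * hb
  · exact mul_left_cancel₀ hy₁ (by linear_combination h' - h + ha + y * hb)
  · exact mul_left_cancel₀ hy (by linear_combination h - h' - ha + (y + 1) * hc)

theorem stmt_1_general (G H : Multigraph) (e1 e2 : G.E) (f1 f2 : H.E)
    (hne : e1 ≠ e2) (hnf : f1 ≠ f2)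
    (hpe : G.ends e1 = G.ends e2) (hpf : H.ends f1 = H.ends f2)
    (hcG : (G.deleteSet {e1, e2}).Connected) (hcH : (H.deleteSet {f1, f2}).Connected) :
    (((G.deleteSet {e1, e2}).tutte = (H.deleteSet {f1, f2}).tutte →
        (G.delete e1).tutte = (H.delete f1).tutte → G.tutte = H.tutte) ∧
      ((G.deleteSet {e1, e2}).tutte = (H.deleteSet {f1, f2}).tutte →
        G.tutte = H.tutte → (G.delete e1).tutte = (H.delete f1).tutte) ∧
      ((G.delete e1).tutte = (H.delete f1).tutte → G.tutte = H.tutte →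
        (G.deleteSet {e1, e2}).tutte = (H.deleteSet {f1, f2}).tutte)) := by
  have hy₁ : (X 1 + 1 : MvPolynomial (Fin 2) ℤ) ≠ 0 := fun h => by
    simpa using congrArg (eval 0) h
  exact two_of_three_of_add_mul_eq_add_one_mul (X_ne_zero 1) hy₁
    (Multigraph.tutte_add_X_mul_tutte_deleteSet_pair hne hpe
      (Multigraph.rk_sdiff_eq_rk_univ_of_connected hcG))
    (Multigraph.tutte_add_X_mul_tutte_deleteSet_pair hnf hpf
      (Multigraph.rk_sdiff_eq_rk_univ_of_connected hcH))

/-- any two of the three Tutte-polynomial equalities imply the third. -/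
theorem stmt_1 (G H : Multigraph) (e1 e2 : G.E) (f1 f2 : H.E)
    (hne : e1 ≠ e2) (hnf : f1 ≠ f2)
    (hpe : G.ends e1 = G.ends e2) (hpf : H.ends f1 = H.ends f2)
    (hle : ¬ (G.ends e1).IsDiag) (hlf : ¬ (H.ends f1).IsDiag)
    (hcG : (G.deleteSet {e1, e2}).Connected) (hcH : (H.deleteSet {f1, f2}).Connected) :
    (((G.deleteSet {e1, e2}).tutte = (H.deleteSet {f1, f2}).tutte →
        (G.delete e1).tutte = (H.delete f1).tutte → G.tutte = H.tutte) ∧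
      ((G.deleteSet {e1, e2}).tutte = (H.deleteSet {f1, f2}).tutte →
        G.tutte = H.tutte → (G.delete e1).tutte = (H.delete f1).tutte) ∧
      ((G.delete e1).tutte = (H.delete f1).tutte → G.tutte = H.tutte →
        (G.deleteSet {e1, e2}).tutte = (H.deleteSet {f1, f2}).tutte)) :=
  stmt_1_general G H e1 e2 f1 f2 hne hnf hpe hpf hcG hcH
end

section
/- Let G and H be vertex-disjoint connected multigraphs with distinguished distinct vertices u_1,…,u_k in G and v_1,…,v_k in H. For S ⊆ {{i,j} : 1 ≤ i < j ≤ k}, let G_S (resp. H_S) be G (resp. H) with a new edge joining u_i and u_j (resp. v_i and v_j) added for each {i,j} ∈ S. If T_{G_S} = T_{H_S} for every such subset S, then for every multigraph W with distinct vertices w_1,…,w_k, the graph obtained by gluing G to W by identifying u_i with w_i for each i has the same Tutte polynomial as the graph obtained by gluing H to W by identifying v_i with w_i for each i. -/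
open scoped BigOperators
open MvPolynomial

attribute [local instance] Classical.propDecidable

/-!
Write the Tutte polynomial in its random-cluster form `Z(G) = ∑_A q ^ c(A) v ^ |A|`, with
`q = (x - 1)(y - 1)` and `v = y - 1`. After the substitution `x = t + 1`, `y = 2` the degree
and the order of `Z(G)` in `t` are `|V|` and `c(E)`, so `Z(G)` determines `T(G)`; conversely
`T(G)` determines `Z(G)` when `G` is connected.

For edge sets `A` of `G` and `B` of `W`, the glued graph has
`c(A ∪ B) = (c_G(A) - |π_A|) + (c_W(B) - |π_B|) + |π_A ⊔ π_B|` components, where `π_A` is the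
partition of the terminals induced by the components of `(V(G), A)`. Hence `Z(G ⊔ W)` is a sum
over `B` of a factor depending only on `W` times `Z_G(π_B)`, where `Z_G(π)` counts components of
`G` after merging the terminals along `π`. The same count for `G_S` gives the triangular system
`Z(G_S) = ∑_{S' ⊆ S} v ^ |S'| Z_G(S')`, so the hypotheses force `Z_G(π) = Z_H(π)` for every `π`,
and therefore `Z(G ⊔ W) = Z(H ⊔ W)`.
-/

open Function

theorem Sym2.exists_of_map_eq_mk {α β : Type} {f : α → β} {p : Sym2 α} {x y : β}
    (h : p.map f = s(x, y)) : ∃ a b, p = s(a, b) ∧ f a = x ∧ f b = y := by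
  induction p using Sym2.ind with | _ a b =>
  rcases Sym2.eq_iff.1 h with ⟨rfl, rfl⟩ | ⟨rfl, rfl⟩
  · exact ⟨a, b, rfl, rfl, rfl⟩
  · exact ⟨b, a, Sym2.eq_swap, rfl, rfl⟩

open Relation in
theorem Sym2.exists_finset_eqvGen_iff {ι : Type} [Fintype ι] (ρ : ι → ι → Prop) :
    ∃ T : Finset (Sym2 ι), (∀ p ∈ T, ¬ p.IsDiag) ∧
      ∀ i j, EqvGen (fun i j => s(i, j) ∈ T) i j ↔ EqvGen ρ i j := by
  refine ⟨Finset.univ.filter fun p => ¬ p.IsDiag ∧ ∃ i j, ρ i j ∧ p = s(i, j),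
    fun p hp => (Finset.mem_filter.1 hp).2.1, fun i j => ⟨?_, ?_⟩⟩
  · refine EqvGen.eqvGen_le (r' := EqvGen ρ) (fun a b hab => ?_) i j
    obtain ⟨i, j, hij, h⟩ := (Finset.mem_filter.1 hab).2.2
    rcases Sym2.eq_iff.1 h with ⟨rfl, rfl⟩ | ⟨rfl, rfl⟩
    exacts [.rel _ _ hij, .symm _ _ (.rel _ _ hij)]
  · refine EqvGen.eqvGen_le (r' := EqvGen _) (fun a b hab => ?_) i j
    by_cases h : a = b
    · exact h ▸ .refl a
    · exact .rel _ _ (Finset.mem_filter.2 ⟨Finset.mem_univ _, Sym2.mk_isDiag_iff.not.2 h,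
        a, b, hab, rfl⟩)

theorem Fintype.sum_finset_sum_type {α β M : Type} [Fintype α] [Fintype β] [AddCommMonoid M]
    (f : Finset (α ⊕ β) → M) : ∑ A, f A = ∑ P : Finset α, ∑ Q : Finset β, f (P.disjSum Q) :=
  (Fintype.sum_equiv Finset.sumEquiv.symm.toEquiv _ _ fun _ => rfl).symm.trans
    (Fintype.sum_prod_type _)

theorem Finset.eq_of_sum_powerset_eq {α M : Type} [AddCancelCommMonoid M] {P : Finset α → Prop}
    (hP : ∀ ⦃S T⦄, S ⊆ T → P T → P S) {f g : Finset α → M}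
    (h : ∀ S, P S → ∑ T ∈ S.powerset, f T = ∑ T ∈ S.powerset, g T) (S : Finset α) (hS : P S) :
    f S = g S := by
  induction S using Finset.strongInduction with
  | H S ih =>
    have hsub : ∑ T ∈ S.powerset.erase S, f T = ∑ T ∈ S.powerset.erase S, g T := by
      refine Finset.sum_congr rfl fun T hT => ?_
      obtain ⟨hne, hTS⟩ := Finset.mem_erase.1 hT
      exact ih T (Finset.ssubset_iff_subset_ne.2 ⟨Finset.mem_powerset.1 hTS, hne⟩)
        (hP (Finset.mem_powerset.1 hTS) hS)
    have := h S hS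
    rw [← Finset.add_sum_erase _ _ (Finset.mem_powerset_self S),
      ← Finset.add_sum_erase _ _ (Finset.mem_powerset_self S), hsub] at this
    exact add_right_cancel this

namespace Polynomial

variable {R ι : Type} [Semiring R]

theorem coeff_sum_X_pow (s : Finset ι) (f : ι → ℕ) (n : ℕ) :
    (∑ i ∈ s, (X : R[X]) ^ f i).coeff n = (s.filter fun i => f i = n).card := by
  simp only [finsetSum_coeff, coeff_X_pow, eq_comm (a := n), Finset.sum_boole]

variable [CharZero R] {s : Finset ι} {f : ι → ℕ} {i₀ : ι}

theorem coeff_sum_X_pow_ne_zero (hi₀ : i₀ ∈ s) :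
    (∑ i ∈ s, (X : R[X]) ^ f i).coeff (f i₀) ≠ 0 := by
  rw [coeff_sum_X_pow, Nat.cast_ne_zero, ← Nat.pos_iff_ne_zero, Finset.card_pos]
  exact ⟨i₀, Finset.mem_filter.2 ⟨hi₀, rfl⟩⟩

theorem natDegree_sum_X_pow (hi₀ : i₀ ∈ s) (h : ∀ i ∈ s, f i ≤ f i₀) :
    (∑ i ∈ s, (X : R[X]) ^ f i).natDegree = f i₀ :=
  natDegree_eq_of_le_of_coeff_ne_zero
    (natDegree_sum_le_of_forall_le _ _ fun i hi => (natDegree_X_pow_le _).trans (h i hi))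
    (coeff_sum_X_pow_ne_zero hi₀)

theorem natTrailingDegree_sum_X_pow (hi₀ : i₀ ∈ s) (h : ∀ i ∈ s, f i₀ ≤ f i) :
    (∑ i ∈ s, (X : R[X]) ^ f i).natTrailingDegree = f i₀ := by
  refine le_antisymm (natTrailingDegree_le_of_ne_zero (coeff_sum_X_pow_ne_zero hi₀))
    (le_natTrailingDegree (fun h0 => coeff_sum_X_pow_ne_zero hi₀ (by rw [h0, coeff_zero]))
      fun m hm => ?_)
  rw [coeff_sum_X_pow, Nat.cast_eq_zero, Finset.card_eq_zero, Finset.filter_eq_empty_iff]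
  exact fun i hi him => (h i hi).not_gt (him ▸ hm)

end Polynomial

theorem MvPolynomial.X_sub_one_ne_zero {σ R : Type} [CommRing R] [Nontrivial R] (i : σ) :
    (X i - 1 : MvPolynomial σ R) ≠ 0 := fun h => by
  simpa using congrArg constantCoeff h

namespace Relation

variable {α β γ ι : Type}

noncomputable def numClasses (r : α → α → Prop) : ℕ := Nat.card (Quot r)

theorem numClasses_congr {r s : α → α → Prop} (h₁ : ∀ a b, r a b → EqvGen s a b)
    (h₂ : ∀ a b, s a b → EqvGen r a b) : numClasses r = numClasses s :=
  Nat.card_congr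
    { toFun := Quot.lift (Quot.mk s) fun a b h => Quot.eqvGen_sound (h₁ a b h)
      invFun := Quot.lift (Quot.mk r) fun a b h => Quot.eqvGen_sound (h₂ a b h)
      left_inv := fun x => by induction x using Quot.ind; rfl
      right_inv := fun x => by induction x using Quot.ind; rfl }

theorem numClasses_eq_card_of_inverse {r : α → α → Prop} (f : α → γ)
    (hf : ∀ a b, r a b → f a = f b) (g : γ → Quot r) (hgf : ∀ a, g (f a) = Quot.mk r a)
    (hfg : ∀ c, Quot.lift f hf (g c) = c) : numClasses r = Nat.card γ :=
  Nat.card_congr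
    { toFun := Quot.lift f hf
      invFun := g
      left_inv := fun x => by induction x using Quot.ind; exact hgf _
      right_inv := hfg }

theorem numClasses_eq_card_range (f : ι → α) :
    numClasses (fun i j => f i = f j) = Nat.card (Set.range f) :=
  Nat.card_congr (Setoid.quotientKerEquivRange f)

theorem numClasses_eqvGen_on (r : α → α → Prop) (f : ι → α) :
    numClasses (EqvGen r on f) = Nat.card (Set.range (Quot.mk r ∘ f)) := by
  rw [← numClasses_eq_card_range]
  exact numClasses_congr (fun i j h => .rel _ _ (Quot.eqvGen_sound h))
    (fun i j h => .rel _ _ (Quot.eqvGen_exact h))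

theorem numClasses_eqvGen_or (τ π : α → α → Prop) :
    numClasses (fun a b => EqvGen τ a b ∨ π a b) = numClasses (fun a b => τ a b ∨ π a b) :=
  numClasses_congr
    (fun a b => Or.rec (EqvGen.mono (fun _ _ => Or.inl) a b) fun h => .rel _ _ (.inr h))
    fun _ _ h => .rel _ _ (h.imp_left (.rel _ _))

theorem numClasses_of_forall_not {r : α → α → Prop} (h : ∀ a b, ¬ r a b) :
    numClasses r = Nat.card α :=
  numClasses_eq_card_of_inverse id (fun a b hab => (h a b hab).elim) (Quot.mk r) (fun _ => rfl)
    fun _ => rfl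

section Finite

variable [Finite α]

theorem numClasses_le_card (r : α → α → Prop) : numClasses r ≤ Nat.card α :=
  Nat.card_le_card_of_surjective (Quot.mk r) Quot.mk_surjective

theorem numClasses_anti {r s : α → α → Prop} (h : ∀ a b, r a b → s a b) :
    numClasses s ≤ numClasses r :=
  Nat.card_le_card_of_surjective (Quot.lift (Quot.mk s) fun a b hab => Quot.sound (h a b hab))
    fun x => by induction x using Quot.ind with | _ a => exact ⟨Quot.mk r a, rfl⟩

theorem numClasses_eqvGen_on_le (r : α → α → Prop) (f : ι → α) :
    numClasses (EqvGen r on f) ≤ numClasses r := by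
  rw [numClasses_eqvGen_on]
  exact Finite.card_subtype_le _

theorem numClasses_le_numClasses_or_add_one (r : α → α → Prop) (a b : α) :
    numClasses r ≤ numClasses (fun x y => r x y ∨ s(x, y) = s(a, b)) + 1 := by
  set r' := fun x y => r x y ∨ s(x, y) = s(a, b)
  let g : α → Quot r := fun x => if Quot.mk r x = Quot.mk r b then Quot.mk r a else Quot.mk r x
  have hab : g a = g b := by by_cases h : Quot.mk r a = Quot.mk r b <;> simp [g, h]
  have hg : ∀ x y, r' x y → g x = g y := by
    rintro x y (hxy | hxy)
    · simp only [g, Quot.sound hxy]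
    · rcases Sym2.eq_iff.1 hxy with ⟨rfl, rfl⟩ | ⟨rfl, rfl⟩
      exacts [hab, hab.symm]
  have hrange : {Quot.mk r b}ᶜ ⊆ Set.range (Quot.lift g hg) := by
    intro c hc
    induction c using Quot.ind with | _ x =>
    exact ⟨Quot.mk r' x, if_neg hc⟩
  have : Finite (Quot r') := Finite.of_surjective _ Quot.mk_surjective
  calc numClasses r = ({Quot.mk r b}ᶜ : Set (Quot r)).ncard + 1 := by
        rw [numClasses, ← Set.ncard_add_ncard_compl {Quot.mk r b}, Set.ncard_singleton, add_comm]
    _ ≤ (Set.range (Quot.lift g hg)).ncard + 1 :=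
        Nat.add_le_add_right (Set.ncard_le_ncard hrange) 1
    _ ≤ numClasses r' + 1 := by
        rw [← Nat.card_coe_set_eq]; gcongr; exact Finite.card_range_le _

end Finite

def glueRel (r : α → α → Prop) (s : β → β → Prop) (u : ι → α) (w : ι → β) :
    α ⊕ β → α ⊕ β → Prop :=
  fun x y => Sum.LiftRel r s x y ∨ ∃ i, x = .inl (u i) ∧ y = .inr (w i)

section Glue

variable (r : α → α → Prop) (s : β → β → Prop) (u : ι → α) (w : ι → β)

theorem glueRel_mk_inl_eq (i : ι) :
    Quot.mk (glueRel r s u w) (.inl (u i)) = Quot.mk _ (.inr (w i)) :=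
  Quot.sound (.inr ⟨i, rfl, rfl⟩)

/-- A class of `r` survives unless it meets some `u i`; those that do are absorbed into `β`, where
they link the `w i` lying over a common class. -/
theorem numClasses_glueRel [Finite α] [Finite β] :
    numClasses (glueRel r s u w) = Nat.card ↥(Set.range (Quot.mk r ∘ u))ᶜ +
      numClasses (fun b b' => s b b' ∨ Relation.Map (EqvGen r on u) w w b b') := by
  set T := Set.range (Quot.mk r ∘ u)
  set s' := fun b b' => s b b' ∨ Relation.Map (EqvGen r on u) w w b b'
  let f : α ⊕ β → ↥Tᶜ ⊕ Quot s'
    | .inl a => if h : Quot.mk r a ∈ T then .inr (Quot.mk s' (w h.choose)) else .inl ⟨_, h⟩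
    | .inr b => .inr (Quot.mk s' b)
  have hf_inl : ∀ i a, Quot.mk r (u i) = Quot.mk r a →
      f (.inl a) = .inr (Quot.mk s' (w i)) := by
    intro i a h
    have hT : Quot.mk r a ∈ T := ⟨i, h⟩
    simp only [f, dif_pos hT]
    exact congrArg _ (Quot.sound (.inr ⟨_, _, Quot.eqvGen_exact (hT.choose_spec.trans h.symm),
      rfl, rfl⟩))
  have hf : ∀ x y, glueRel r s u w x y → f x = f y := by
    rintro _ _ ((@⟨a, a', hr⟩ | ⟨hs⟩) | ⟨i, rfl, rfl⟩)
    · by_cases h : Quot.mk r a ∈ T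
      · obtain ⟨i, hi⟩ := h
        rw [hf_inl i a hi, hf_inl i a' (hi.trans (Quot.sound hr))]
      · have h' : Quot.mk r a' ∉ T := by rwa [← Quot.sound hr]
        simp only [f, dif_neg h, dif_neg h', Quot.sound hr]
    · exact congrArg _ (Quot.sound (.inl hs))
    · exact hf_inl i _ rfl
  let gl : Quot r → Quot (glueRel r s u w) :=
    Quot.lift (fun a => Quot.mk _ (.inl a)) fun a a' h => Quot.sound (.inl (.inl h))
  let gr : Quot s' → Quot (glueRel r s u w) :=
    Quot.lift (fun b => Quot.mk _ (.inr b)) fun b b' h => by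
      rcases h with h | ⟨i, j, hij, rfl, rfl⟩
      · exact Quot.sound (.inl (.inr h))
      · calc Quot.mk _ (.inr (w i)) = gl (Quot.mk r (u i)) := (glueRel_mk_inl_eq r s u w i).symm
          _ = gl (Quot.mk r (u j)) := congrArg gl (Quot.eqvGen_sound hij)
          _ = Quot.mk _ (.inr (w j)) := glueRel_mk_inl_eq r s u w j
  refine (numClasses_eq_card_of_inverse f hf (Sum.elim (fun c => gl c.1) gr) ?_ ?_).trans
    (Nat.card_sum ..)
  · rintro (a | b)
    · by_cases h : Quot.mk r a ∈ T
      · obtain ⟨i, hi⟩ := h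
        rw [hf_inl i a hi]
        exact (glueRel_mk_inl_eq r s u w i).symm.trans (congrArg gl hi)
      · simp only [f, dif_neg h]; rfl
    · rfl
  · rintro (⟨c, hc⟩ | q)
    · induction c using Quot.ind with | _ a => exact dif_neg hc
    · induction q using Quot.ind; rfl

theorem numClasses_glueRel_add [Finite α] [Finite β] :
    numClasses (glueRel r s u w) + numClasses (EqvGen r on u) =
      numClasses r + numClasses (fun b b' => s b b' ∨ Relation.Map (EqvGen r on u) w w b b') := by
  rw [numClasses_glueRel, numClasses_eqvGen_on, Nat.card_coe_set_eq, Nat.card_coe_set_eq,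
    numClasses.eq_def r, ← Set.ncard_add_ncard_compl (Set.range (Quot.mk r ∘ u))]
  ring

theorem numClasses_glueRel_id (ρ : ι → ι → Prop) :
    numClasses (glueRel r ρ u id) = numClasses (fun a b => r a b ∨ Relation.Map ρ u u a b) := by
  refine numClasses_eq_card_of_inverse (Sum.elim (Quot.mk _) (Quot.mk _ ∘ u)) ?_
    (Quot.lift (fun a => Quot.mk _ (.inl a)) ?_) ?_ ?_
  · rintro _ _ ((⟨hr⟩ | ⟨hρ⟩) | ⟨i, rfl, rfl⟩)
    · exact Quot.sound (.inl hr)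
    · exact Quot.sound (.inr ⟨_, _, hρ, rfl, rfl⟩)
    · rfl
  · rintro a b (hr | ⟨i, j, hij, rfl, rfl⟩)
    · exact Quot.sound (.inl (.inl hr))
    · calc Quot.mk _ (.inl (u i)) = Quot.mk (glueRel r ρ u id) (.inr i) :=
            glueRel_mk_inl_eq r ρ u id i
        _ = Quot.mk _ (.inr j) := Quot.sound (.inl (.inr hij))
        _ = Quot.mk _ (.inl (u j)) := (glueRel_mk_inl_eq r ρ u id j).symm
  · rintro (a | i)
    · rfl
    · exact glueRel_mk_inl_eq r ρ u id i
  · intro c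
    induction c using Quot.ind
    rfl

theorem numClasses_or_map_add [Finite α] [Finite ι] (ρ : ι → ι → Prop) :
    numClasses (fun a b => r a b ∨ Relation.Map ρ u u a b) + numClasses (EqvGen r on u) =
      numClasses r + numClasses (fun i j => ρ i j ∨ (EqvGen r on u) i j) := by
  simpa only [numClasses_glueRel_id, Relation.map_id_id] using numClasses_glueRel_add r ρ u id

theorem numClasses_glueRel_add_add [Finite α] [Finite β] [Finite ι] :
    numClasses (glueRel r s u w) + numClasses (EqvGen r on u) + numClasses (EqvGen s on w) =
      numClasses r + numClasses s +
        numClasses (fun i j => (EqvGen r on u) i j ∨ (EqvGen s on w) i j) := by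
  have := numClasses_or_map_add s w (EqvGen r on u)
  have := numClasses_glueRel_add r s u w
  omega

end Glue

end Relation

namespace Multigraph

open Relation

variable (G : Multigraph)

def edgeRel (A : Finset G.E) (a b : G.V) : Prop := ∃ e ∈ A, G.ends e = s(a, b)

theorem comps_eq_numClasses (A : Finset G.E) : G.comps A = numClasses (G.edgeRel A) := by
  have edgeRel_of_adj : ∀ a b, (G.spanning A).Adj a b → G.edgeRel A a b := by
    rintro a b ⟨-, h | ⟨e, he, hab⟩⟩
    · exact h
    · exact ⟨e, he, hab.trans Sym2.eq_swap⟩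
  refine numClasses_congr (fun a b h => EqvGen.mono edgeRel_of_adj _ _
    (EqvGen.reflTransGen_le_eqvGen _ _ _ ((SimpleGraph.reachable_iff_reflTransGen _ _).1 h)))
    fun a b h => .rel _ _ ?_
  by_cases hab : a = b
  · exact hab ▸ SimpleGraph.Reachable.refl a
  · exact SimpleGraph.Adj.reachable ⟨hab, .inl h⟩

theorem comps_le_card (A : Finset G.E) : G.comps A ≤ Fintype.card G.V := by
  rw [comps_eq_numClasses, ← Nat.card_eq_fintype_card]
  exact numClasses_le_card _

theorem comps_anti {A B : Finset G.E} (h : A ⊆ B) : G.comps B ≤ G.comps A := by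
  rw [comps_eq_numClasses, comps_eq_numClasses]
  exact numClasses_anti fun a b ⟨e, he, hab⟩ => ⟨e, h he, hab⟩

theorem comps_empty : G.comps ∅ = Fintype.card G.V := by
  rw [comps_eq_numClasses, ← Nat.card_eq_fintype_card]
  exact numClasses_of_forall_not fun a b ⟨e, he, _⟩ => Finset.notMem_empty e he

theorem card_le_card_add_comps (A : Finset G.E) : Fintype.card G.V ≤ A.card + G.comps A := by
  induction A using Finset.induction_on with
  | empty => rw [comps_empty, Finset.card_empty, zero_add]
  | @insert e A he ih =>
    obtain ⟨⟨a, b⟩, hab⟩ := Quot.exists_rep (G.ends e)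
    have : G.comps A ≤ G.comps (insert e A) + 1 := by
      rw [comps_eq_numClasses, comps_eq_numClasses]
      refine (numClasses_le_numClasses_or_add_one _ a b).trans
        (Nat.add_le_add_right (numClasses_anti ?_) 1)
      rintro x y ⟨e', he', h⟩
      rcases Finset.mem_insert.1 he' with rfl | he'
      · exact .inr (h.symm.trans hab.symm)
      · exact .inl ⟨e', he', h⟩
    rw [Finset.card_insert_of_notMem he]
    omega

theorem Connected.comps_univ {G : Multigraph} (hG : G.Connected) : G.comps Finset.univ = 1 :=
  have := hG.preconnected.subsingleton_connectedComponent
  have := hG.nonempty.map (G.spanning Finset.univ).connectedComponentMk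
  Nat.card_eq_one_iff_unique.2 ⟨inferInstance, inferInstance⟩

theorem Connected.addEdges {G : Multigraph} (hG : G.Connected) (n : Type) [Fintype n]
    [DecidableEq n] (f : n → Sym2 G.V) : (G.addEdges n f).Connected :=
  SimpleGraph.Connected.mono (G := G.spanning Finset.univ)
    (fun _ _ ⟨hab, h⟩ => ⟨hab, h.imp (fun ⟨e, _, he⟩ => ⟨.inl e, Finset.mem_univ _, he⟩)
      (fun ⟨e, _, he⟩ => ⟨.inl e, Finset.mem_univ _, he⟩)⟩) hG

theorem comps_identify (r : G.V → G.V → Prop) (A : Finset G.E) :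
    (G.identify r).comps A = numClasses (fun a b => G.edgeRel A a b ∨ r a b) := by
  refine ((G.identify r).comps_eq_numClasses A).trans <| numClasses_eq_card_of_inverse
    (Quotient.lift (Quot.mk _) fun a b h =>
      Quot.eqvGen_sound (EqvGen.mono (fun _ _ => .inr) _ _ h))
    ?_ (Quot.lift (fun a => Quot.mk _ (Quotient.mk _ a)) ?_) ?_ ?_
  · rintro x y ⟨e, he, h⟩
    obtain ⟨a, b, hab, rfl, rfl⟩ := Sym2.exists_of_map_eq_mk h
    exact Quot.sound (.inl ⟨e, he, hab⟩)
  · rintro a b (⟨e, he, hab⟩ | h)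
    · exact Quot.sound ⟨e, he, by simp [identify, hab]⟩
    · exact congrArg _ (Quotient.sound (EqvGen.rel _ _ h))
  · intro x
    induction x using Quotient.ind
    rfl
  · intro c
    induction c using Quot.ind
    rfl

theorem edgeRel_disjUnion (H : Multigraph) (P : Finset G.E) (Q : Finset H.E)
    (x y : G.V ⊕ H.V) :
    (G.disjUnion H).edgeRel (P.disjSum Q) x y ↔ Sum.LiftRel (G.edgeRel P) (H.edgeRel Q) x y := by
  constructor
  · rintro ⟨e | e, he, h⟩ <;> obtain ⟨a, b, hab, rfl, rfl⟩ := Sym2.exists_of_map_eq_mk h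
    · exact .inl ⟨e, Finset.inl_mem_disjSum.1 he, hab⟩
    · exact .inr ⟨e, Finset.inr_mem_disjSum.1 he, hab⟩
  · rintro (⟨⟨e, he, hab⟩⟩ | ⟨⟨e, he, hab⟩⟩)
    · exact ⟨.inl e, Finset.inl_mem_disjSum.2 he, by simp [disjUnion, hab]⟩
    · exact ⟨.inr e, Finset.inr_mem_disjSum.2 he, by simp [disjUnion, hab]⟩

theorem comps_glue_disjSum (W : Multigraph) {k : ℕ} (u : Fin k → G.V) (w : Fin k → W.V)
    (P : Finset G.E) (Q : Finset W.E) :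
    (G.glue W u w).comps (P.disjSum Q) = numClasses (glueRel (G.edgeRel P) (W.edgeRel Q) u w) := by
  refine ((G.disjUnion W).comps_identify _ (P.disjSum Q)).trans (congrArg numClasses ?_)
  ext x y
  exact or_congr_left (G.edgeRel_disjUnion W P Q x y)

theorem comps_addEdges_disjSum (n : Type) [Fintype n] [DecidableEq n] (f : n → Sym2 G.V)
    (P : Finset G.E) (Q : Finset n) :
    (G.addEdges n f).comps (P.disjSum Q) =
      numClasses (fun a b => G.edgeRel P a b ∨ ∃ p ∈ Q, f p = s(a, b)) := by
  refine ((G.addEdges n f).comps_eq_numClasses _).trans (congrArg numClasses ?_)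
  ext a b
  constructor
  · rintro ⟨e | p, he, h⟩
    · exact .inl ⟨e, Finset.inl_mem_disjSum.1 he, h⟩
    · exact .inr ⟨p, Finset.inr_mem_disjSum.1 he, h⟩
  · rintro (⟨e, he, h⟩ | ⟨p, hp, h⟩)
    · exact ⟨.inl e, Finset.inl_mem_disjSum.2 he, h⟩
    · exact ⟨.inr p, Finset.inr_mem_disjSum.2 hp, h⟩

theorem comps_glue_disjSum_add (W : Multigraph) {k : ℕ} (u : Fin k → G.V) (w : Fin k → W.V)
    (P : Finset G.E) (Q : Finset W.E) :
    (G.glue W u w).comps (P.disjSum Q) + numClasses (EqvGen (G.edgeRel P) on u) +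
        numClasses (EqvGen (W.edgeRel Q) on w) =
      G.comps P + W.comps Q + numClasses (fun i j =>
        (EqvGen (W.edgeRel Q) on w) i j ∨ (EqvGen (G.edgeRel P) on u) i j) := by
  rw [comps_glue_disjSum, comps_eq_numClasses, comps_eq_numClasses, numClasses_glueRel_add_add]
  simp only [or_comm]

theorem comps_addEdges_disjSum_add {k : ℕ} (u : Fin k → G.V) (S : Finset (Sym2 (Fin k)))
    (P : Finset G.E) (Q : Finset {p // p ∈ S}) :
    (G.addEdges {p // p ∈ S} (fun p => Sym2.map u p.1)).comps (P.disjSum Q) +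
        numClasses (EqvGen (G.edgeRel P) on u) =
      G.comps P + numClasses (fun i j =>
        s(i, j) ∈ Q.map (Embedding.subtype _) ∨ (EqvGen (G.edgeRel P) on u) i j) := by
  rw [comps_addEdges_disjSum, comps_eq_numClasses, ← numClasses_or_map_add]
  congr 3
  ext a b
  refine or_congr_right ⟨fun ⟨p, hp, h⟩ => ?_, fun ⟨i, j, hij, hi, hj⟩ => ?_⟩
  · obtain ⟨i, j, hp', rfl, rfl⟩ := Sym2.exists_of_map_eq_mk h
    exact ⟨i, j, Finset.mem_map.2 ⟨p, hp, hp'⟩, rfl, rfl⟩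
  · obtain ⟨p, hp, hpij⟩ := Finset.mem_map.1 hij
    exact ⟨p, hp, by rw [← hi, ← hj, ← Sym2.map_mk, ← hpij]; rfl⟩

local notation "𝐪" => ((X 0 - 1) * (X 1 - 1) : MvPolynomial (Fin 2) ℤ)
local notation "𝐯" => (X 1 - 1 : MvPolynomial (Fin 2) ℤ)

/-- The Fortuin–Kasteleyn form `∑ q ^ c(A) v ^ |A|` of the Tutte polynomial, at
`q = (x - 1)(y - 1)` and `v = y - 1`. -/
noncomputable def randomCluster : MvPolynomial (Fin 2) ℤ :=
  ∑ A : Finset G.E, 𝐪 ^ G.comps A * 𝐯 ^ A.card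

/-- The exponent of `𝐪` counts the components of `(V, A)` once `u i` and `u j` are identified
whenever `τ i j`. -/
noncomputable def randomClusterWith {ι : Type} (u : ι → G.V) (τ : ι → ι → Prop) :
    MvPolynomial (Fin 2) ℤ :=
  ∑ A : Finset G.E, 𝐪 ^ (G.comps A - numClasses (EqvGen (G.edgeRel A) on u) +
    numClasses (fun i j => τ i j ∨ (EqvGen (G.edgeRel A) on u) i j)) * 𝐯 ^ A.card

theorem mul_tutte_eq_randomCluster :
    (X 0 - 1) ^ G.comps Finset.univ * (X 1 - 1) ^ Fintype.card G.V * G.tutte =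
      G.randomCluster := by
  rw [tutte, Finset.mul_sum]
  refine Finset.sum_congr rfl fun A _ => ?_
  have := G.comps_le_card A
  have := G.comps_le_card Finset.univ
  obtain ⟨d₁, hd₁⟩ := Nat.exists_eq_add_of_le (G.comps_anti (Finset.subset_univ A))
  obtain ⟨d₂, hd₂⟩ := Nat.exists_eq_add_of_le (G.card_le_card_add_comps A)
  have e₁ : G.rk Finset.univ - G.rk A = d₁ := by unfold rk; omega
  have e₂ : A.card - G.rk A = d₂ := by unfold rk; omega
  have key : 𝐪 ^ G.comps A * 𝐯 ^ A.card =
      (X 0 - 1) ^ G.comps A * (X 1 - 1) ^ (A.card + G.comps A) := by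
    rw [mul_pow, pow_add]; ring
  rw [e₁, e₂, key, hd₂, hd₁]
  ring

noncomputable def atYEqTwo : MvPolynomial (Fin 2) ℤ →+* Polynomial ℤ :=
  eval₂Hom Polynomial.C ![Polynomial.X + 1, 2]

theorem atYEqTwo_randomCluster :
    atYEqTwo G.randomCluster = ∑ A : Finset G.E, Polynomial.X ^ G.comps A := by
  norm_num [randomCluster, atYEqTwo]

theorem atYEqTwo_tutte :
    atYEqTwo G.tutte = ∑ A : Finset G.E, Polynomial.X ^ (G.rk Finset.univ - G.rk A) := by
  norm_num [tutte, atYEqTwo]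

theorem natDegree_atYEqTwo_randomCluster :
    (atYEqTwo G.randomCluster).natDegree = Fintype.card G.V := by
  rw [atYEqTwo_randomCluster, Polynomial.natDegree_sum_X_pow (Finset.mem_univ ∅)
    fun A _ => G.comps_anti (Finset.empty_subset A), comps_empty]

theorem natTrailingDegree_atYEqTwo_randomCluster :
    (atYEqTwo G.randomCluster).natTrailingDegree = G.comps Finset.univ := by
  rw [atYEqTwo_randomCluster, Polynomial.natTrailingDegree_sum_X_pow (Finset.mem_univ _)
    fun A _ => G.comps_anti (Finset.subset_univ A)]

theorem natDegree_atYEqTwo_tutte : (atYEqTwo G.tutte).natDegree = G.rk Finset.univ := by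
  have hrk : G.rk ∅ = 0 := by rw [rk, comps_empty, Nat.sub_self]
  rw [atYEqTwo_tutte, Polynomial.natDegree_sum_X_pow (Finset.mem_univ ∅)
    fun A _ => by rw [hrk]; exact Nat.sub_le _ _, hrk, Nat.sub_zero]

theorem tutte_eq_of_randomCluster_eq {G H : Multigraph}
    (h : G.randomCluster = H.randomCluster) : G.tutte = H.tutte := by
  have hc : G.comps Finset.univ = H.comps Finset.univ := by
    rw [← natTrailingDegree_atYEqTwo_randomCluster, h, natTrailingDegree_atYEqTwo_randomCluster]
  have hn : Fintype.card G.V = Fintype.card H.V := by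
    rw [← natDegree_atYEqTwo_randomCluster, h, natDegree_atYEqTwo_randomCluster]
  rw [← mul_tutte_eq_randomCluster, ← mul_tutte_eq_randomCluster, hc, hn] at h
  exact mul_left_cancel₀ (mul_ne_zero (pow_ne_zero _ (X_sub_one_ne_zero 0))
    (pow_ne_zero _ (X_sub_one_ne_zero 1))) h

theorem Connected.card_eq_of_tutte_eq {G H : Multigraph} (hG : G.Connected) (hH : H.Connected)
    (h : G.tutte = H.tutte) : Fintype.card G.V = Fintype.card H.V := by
  have hrk : G.rk Finset.univ = H.rk Finset.univ := by
    rw [← natDegree_atYEqTwo_tutte, h, natDegree_atYEqTwo_tutte]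
  have := hG.nonempty
  have := hH.nonempty
  have := G.comps_le_card Finset.univ
  have := H.comps_le_card Finset.univ
  unfold rk at hrk
  rw [hG.comps_univ, hH.comps_univ] at *
  omega

theorem Connected.randomCluster_eq_of_tutte_eq {G H : Multigraph} (hG : G.Connected)
    (hH : H.Connected) (h : G.tutte = H.tutte) : G.randomCluster = H.randomCluster := by
  rw [← mul_tutte_eq_randomCluster, ← mul_tutte_eq_randomCluster, hG.comps_univ, hH.comps_univ,
    hG.card_eq_of_tutte_eq hH h, h]

theorem randomClusterWith_congr {ι : Type} (u : ι → G.V) {τ τ' : ι → ι → Prop}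
    (h : ∀ i j, EqvGen τ i j ↔ EqvGen τ' i j) :
    G.randomClusterWith u τ = G.randomClusterWith u τ' := by
  have : EqvGen τ = EqvGen τ' := funext₂ fun i j => propext (h i j)
  simp only [randomClusterWith, ← numClasses_eqvGen_or τ, ← numClasses_eqvGen_or τ', this]

theorem randomCluster_glue (W : Multigraph) {k : ℕ} (u : Fin k → G.V) (w : Fin k → W.V) :
    (G.glue W u w).randomCluster = ∑ B : Finset W.E,
      𝐪 ^ (W.comps B - numClasses (EqvGen (W.edgeRel B) on w)) * 𝐯 ^ B.card *
        G.randomClusterWith u (EqvGen (W.edgeRel B) on w) := by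
  change ∑ A : Finset (G.E ⊕ W.E), 𝐪 ^ (G.glue W u w).comps A * 𝐯 ^ A.card = _
  rw [Fintype.sum_finset_sum_type, Finset.sum_comm]
  refine Finset.sum_congr rfl fun B _ => ?_
  rw [randomClusterWith, Finset.mul_sum]
  refine Finset.sum_congr rfl fun A _ => ?_
  have := G.comps_glue_disjSum_add W u w A B
  have := numClasses_eqvGen_on_le (G.edgeRel A) u
  have := numClasses_eqvGen_on_le (W.edgeRel B) w
  have hc : (G.glue W u w).comps (A.disjSum B) =
      W.comps B - numClasses (EqvGen (W.edgeRel B) on w) +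
        (G.comps A - numClasses (EqvGen (G.edgeRel A) on u) + numClasses (fun i j =>
          (EqvGen (W.edgeRel B) on w) i j ∨ (EqvGen (G.edgeRel A) on u) i j)) := by
    rw [comps_eq_numClasses, comps_eq_numClasses] at *
    omega
  rw [hc, Finset.card_disjSum, pow_add, pow_add]
  ring

theorem randomCluster_addEdges {k : ℕ} (u : Fin k → G.V) (S : Finset (Sym2 (Fin k))) :
    (G.addEdges {p // p ∈ S} (fun p => Sym2.map u p.1)).randomCluster =
      ∑ T ∈ S.powerset, 𝐯 ^ T.card * G.randomClusterWith u (fun i j => s(i, j) ∈ T) := by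
  change ∑ A : Finset (G.E ⊕ {p // p ∈ S}),
    𝐪 ^ (G.addEdges {p // p ∈ S} (fun p => Sym2.map u p.1)).comps A * 𝐯 ^ A.card = _
  rw [Fintype.sum_finset_sum_type, Finset.sum_comm]
  refine (Finset.sum_congr rfl fun Q _ => ?_).trans (Finset.sum_nbij'
    (·.map (Embedding.subtype _)) (·.subtype _)
    (fun Q _ => Finset.mem_powerset.2 fun p hp => Finset.property_of_mem_map_subtype Q hp)
    (fun _ _ => Finset.mem_univ _)
    (fun Q _ => Finset.map_injective (Embedding.subtype _)
      (Finset.subtype_map_of_mem fun p hp => Finset.property_of_mem_map_subtype Q hp))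
    (fun T hT => Finset.subtype_map_of_mem (Finset.mem_powerset.1 hT))
    (fun Q _ => by rw [Finset.card_map]))
  rw [randomClusterWith, Finset.mul_sum]
  refine Finset.sum_congr rfl fun A _ => ?_
  have := G.comps_addEdges_disjSum_add u S A Q
  have := numClasses_eqvGen_on_le (G.edgeRel A) u
  have hc : (G.addEdges {p // p ∈ S} (fun p => Sym2.map u p.1)).comps (A.disjSum Q) =
      G.comps A - numClasses (EqvGen (G.edgeRel A) on u) + numClasses (fun i j =>
        s(i, j) ∈ Q.map (Embedding.subtype _) ∨ (EqvGen (G.edgeRel A) on u) i j) := by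
    rw [comps_eq_numClasses] at *
    omega
  rw [hc, Finset.card_disjSum, pow_add]
  ring

theorem Connected.randomClusterWith_eq_of_tutte_addEdges_eq {G H : Multigraph} {k : ℕ}
    {u : Fin k → G.V} {v : Fin k → H.V} (hG : G.Connected) (hH : H.Connected)
    (h : ∀ S : Finset (Sym2 (Fin k)), (∀ p ∈ S, ¬ p.IsDiag) →
      (G.addEdges {p // p ∈ S} (fun p => Sym2.map u p.1)).tutte =
        (H.addEdges {p // p ∈ S} (fun p => Sym2.map v p.1)).tutte)
    (T : Finset (Sym2 (Fin k))) (hT : ∀ p ∈ T, ¬ p.IsDiag) :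
    G.randomClusterWith u (fun i j => s(i, j) ∈ T) =
      H.randomClusterWith v (fun i j => s(i, j) ∈ T) := by
  refine mul_left_cancel₀ (pow_ne_zero T.card (X_sub_one_ne_zero 1)) ?_
  refine Finset.eq_of_sum_powerset_eq (P := fun S : Finset (Sym2 (Fin k)) => ∀ p ∈ S, ¬ p.IsDiag)
    (fun _ _ hsub hdiag p hp => hdiag p (hsub hp))
    (f := fun T => 𝐯 ^ T.card * G.randomClusterWith u (fun i j => s(i, j) ∈ T))
    (g := fun T => 𝐯 ^ T.card * H.randomClusterWith v (fun i j => s(i, j) ∈ T))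
    (fun S hS => ?_) T hT
  rw [← randomCluster_addEdges, ← randomCluster_addEdges]
  exact (hG.addEdges _ _).randomCluster_eq_of_tutte_eq (hH.addEdges _ _) (h S hS)

end Multigraph

open Multigraph Relation

theorem stmt_6_general (G H W : Multigraph) {k : ℕ}
    (u : Fin k → G.V) (v : Fin k → H.V) (w : Fin k → W.V)
    (hG : G.Connected) (hH : H.Connected)
    (h : ∀ S : Finset (Sym2 (Fin k)), (∀ p ∈ S, ¬ p.IsDiag) →
      (G.addEdges {p // p ∈ S} (fun p => Sym2.map u p.1)).tutte =
        (H.addEdges {p // p ∈ S} (fun p => Sym2.map v p.1)).tutte) :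
    (G.glue W u w).tutte = (H.glue W v w).tutte := by
  refine tutte_eq_of_randomCluster_eq ?_
  rw [randomCluster_glue, randomCluster_glue]
  refine Finset.sum_congr rfl fun B _ => congrArg _ ?_
  obtain ⟨T, hT, hTB⟩ := Sym2.exists_finset_eqvGen_iff (EqvGen (W.edgeRel B) on w)
  rw [G.randomClusterWith_congr u fun i j => (hTB i j).symm,
    H.randomClusterWith_congr v fun i j => (hTB i j).symm]
  exact hG.randomClusterWith_eq_of_tutte_addEdges_eq hH h T hT

/-- if `G_S` and `H_S` are T-equivalent for every set `S` of added
edges on the distinguished vertices, then gluing `G` and `H` to an arbitrary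
graph `W` along the distinguished vertices yields T-equivalent graphs. -/
theorem stmt_6 (G H W : Multigraph) {k : ℕ}
    (u : Fin k → G.V) (v : Fin k → H.V) (w : Fin k → W.V)
    (hu : Function.Injective u) (hv : Function.Injective v) (hw : Function.Injective w)
    (hG : G.Connected) (hH : H.Connected)
    (h : ∀ S : Finset (Sym2 (Fin k)), (∀ p ∈ S, ¬ p.IsDiag) →
      (G.addEdges {p // p ∈ S} (fun p => Sym2.map u p.1)).tutte =
        (H.addEdges {p // p ∈ S} (fun p => Sym2.map v p.1)).tutte) :
    (G.glue W u w).tutte = (H.glue W v w).tutte :=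
  stmt_6_general G H W u v w hG hH h
end

section
/- Let R be a connected multigraph with distinct vertices u_1,…,u_k and an automorphism ψ with ψ(u_i) = u_{i+1} (indices mod k). Let W be a loopless multigraph with distinct vertices w_1,…,w_k admitting an automorphism ρ such that for some a ∈ [k], ρ(w_{1+s}) = w_{a−s} for all 0 ≤ s ≤ k−1 (indices mod k). Then R(u_1,…,u_k) ⊔ W(w_1,…,w_k) is isomorphic to R(u_k,…,u_1) ⊔ W(w_1,…,w_k). -/
open scoped BigOperators
open MvPolynomial

attribute [local instance] Classical.propDecidable

/-! With `c = rev a`, the automorphism `ψ ^ c ⊔ ρ` of `R ⊔ W` sends each glued pair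
`(u i, w i)` to `(u (i + c), w (a - i)) = (u (rev (a - i)), w (a - i))`, a glued pair of the
flipped gluing. An isomorphism of multigraphs that carries one identifying relation onto another
descends to the quotients, which gives the claim. -/

def Equiv.sym2Map {α β : Type*} (σ : α ≃ β) : Sym2 α ≃ Sym2 β where
  toFun := Sym2.map σ
  invFun := Sym2.map σ.symm
  left_inv p := by simp [Sym2.map_map]
  right_inv p := by simp [Sym2.map_map]

theorem Relation.EqvGen.map {α β : Type*} {r : α → α → Prop} {s : β → β → Prop} (f : α → β)
    (hf : ∀ a b, r a b → s (f a) (f b)) {a b : α} (hab : EqvGen r a b) :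
    EqvGen s (f a) (f b) := by
  induction hab with
  | rel x y hxy => exact .rel _ _ (hf x y hxy)
  | refl x => exact .refl _
  | symm x y _ ih => exact .symm _ _ ih
  | trans x y z _ _ ih₁ ih₂ => exact .trans _ _ _ ih₁ ih₂

theorem Relation.eqvGen_iff_of_equiv {α β : Type*} {r : α → α → Prop} {s : β → β → Prop}
    (σ : α ≃ β) (h : ∀ a b, r a b ↔ s (σ a) (σ b)) (a b : α) :
    EqvGen r a b ↔ EqvGen s (σ a) (σ b) := by
  refine ⟨EqvGen.map σ fun x y => (h x y).1, fun hab => ?_⟩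
  simpa using hab.map σ.symm fun x y hxy => (h _ _).2 (by simpa using hxy)

theorem Equiv.Perm.pow_apply_of_apply_eq_add_one {α M : Type*} [AddMonoidWithOne M]
    {ψ : Equiv.Perm α} {u : M → α} (h : ∀ i, ψ (u i) = u (i + 1)) (n : ℕ) (i : M) :
    (ψ ^ n) (u i) = u (i + n) := by
  induction n with
  | zero => simp
  | succ n ih => rw [pow_succ', Equiv.Perm.mul_apply, ih, h, Nat.cast_succ, add_assoc]

namespace Multigraph

theorem isIsoMap_iff_exists_edgeEquiv {G H : Multigraph} (σ : G.V ≃ H.V) :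
    G.IsIsoMap H σ ↔ ∃ ε : G.E ≃ H.E, ∀ e, H.ends (ε e) = (G.ends e).map σ := by
  constructor
  · intro h
    have fiber (p : Sym2 G.V) : {e // G.ends e = p} ≃ {e // H.ends e = p.map σ} :=
      Fintype.equivOfCardEq (by simpa only [Nat.card_eq_fintype_card] using h p)
    refine ⟨(Equiv.sigmaFiberEquiv G.ends).symm.trans
      ((Equiv.sigmaCongr σ.sym2Map fiber).trans (Equiv.sigmaFiberEquiv H.ends)), fun e => ?_⟩
    exact (fiber (G.ends e) ⟨e, rfl⟩).2
  · rintro ⟨ε, hε⟩ p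
    exact Nat.card_congr (ε.subtypeEquiv fun e => by
      rw [hε]; exact (Sym2.map.injective σ.injective).eq_iff.symm)

theorem IsIsoMap.trans {G H K : Multigraph} {σ : G.V ≃ H.V} {τ : H.V ≃ K.V}
    (hσ : G.IsIsoMap H σ) (hτ : H.IsIsoMap K τ) : G.IsIsoMap K (σ.trans τ) := by
  intro p
  rw [hσ p, hτ (p.map σ), Sym2.map_map, ← Equiv.coe_trans]

theorem IsAuto.pow {G : Multigraph} {ψ : Equiv.Perm G.V} (hψ : G.IsAuto ψ) (n : ℕ) :
    G.IsAuto (ψ ^ n) := by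
  induction n with
  | zero => intro p; simp
  | succ n ih => rw [pow_succ]; exact hψ.trans ih

theorem IsIsoMap.disjUnion {G G' H H' : Multigraph} {σ : G.V ≃ G'.V} {τ : H.V ≃ H'.V}
    (hσ : G.IsIsoMap G' σ) (hτ : H.IsIsoMap H' τ) :
    (G.disjUnion H).IsIsoMap (G'.disjUnion H') (σ.sumCongr τ) := by
  obtain ⟨εσ, hεσ⟩ := (isIsoMap_iff_exists_edgeEquiv σ).1 hσ
  obtain ⟨ετ, hετ⟩ := (isIsoMap_iff_exists_edgeEquiv τ).1 hτ
  refine (isIsoMap_iff_exists_edgeEquiv _).2 ⟨εσ.sumCongr ετ, ?_⟩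
  rintro (e | e)
  · change (G'.ends (εσ e)).map Sum.inl = ((G.ends e).map Sum.inl).map (σ.sumCongr τ)
    rw [hεσ, Sym2.map_map, Sym2.map_map]
    rfl
  · change (H'.ends (ετ e)).map Sum.inr = ((H.ends e).map Sum.inr).map (σ.sumCongr τ)
    rw [hετ, Sym2.map_map, Sym2.map_map]
    rfl

theorem identify_iso_identify {G H : Multigraph} {σ : G.V ≃ H.V} (hσ : G.IsIsoMap H σ)
    {r : G.V → G.V → Prop} {r' : H.V → H.V → Prop} (h : ∀ a b, r a b ↔ r' (σ a) (σ b)) :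
    (G.identify r).Iso (H.identify r') := by
  obtain ⟨ε, hε⟩ := (isIsoMap_iff_exists_edgeEquiv σ).1 hσ
  let σ' : (G.identify r).V ≃ (H.identify r').V :=
    Quotient.congr σ (Relation.eqvGen_iff_of_equiv σ h)
  refine ⟨σ', (isIsoMap_iff_exists_edgeEquiv _).2 ⟨ε, fun (e : G.E) => ?_⟩⟩
  change (H.ends (ε e)).map _ = ((G.ends e).map _).map σ'
  rw [hε]
  induction G.ends e using Sym2.ind
  rfl

theorem glue_iso_glue {G G' H H' : Multigraph} {k : ℕ} {u : Fin k → G.V} {w : Fin k → H.V}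
    {u' : Fin k → G'.V} {w' : Fin k → H'.V} {σ : G.V ≃ G'.V} {τ : H.V ≃ H'.V}
    (hσ : G.IsIsoMap G' σ) (hτ : H.IsIsoMap H' τ) (π : Equiv.Perm (Fin k))
    (hu : ∀ i, σ (u i) = u' (π i)) (hw : ∀ i, τ (w i) = w' (π i)) :
    (G.glue H u w).Iso (G'.glue H' u' w') := by
  have hglue (x y : G.V ⊕ H.V) : (∃ i, x = .inl (u i) ∧ y = .inr (w i)) ↔
      ∃ j, σ.sumCongr τ x = .inl (u' j) ∧ σ.sumCongr τ y = .inr (w' j) := by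
    refine Iff.trans ?_ π.surjective.exists.symm
    refine exists_congr fun i => and_congr ?_ ?_
    · rw [← hu]; rcases x with x | x <;> simp
    · rw [← hw]; rcases y with y | y <;> simp
  exact identify_iso_identify (hσ.disjUnion hτ) hglue

end Multigraph

theorem stmt_10_general {k : ℕ} [NeZero k] (R W : Multigraph)
    (u : Fin k → R.V) (w : Fin k → W.V)
    (ψ : R.V ≃ R.V) (hψ : R.IsAuto ψ) (hrot : ∀ i : Fin k, ψ (u i) = u (i + 1))
    (ρ : W.V ≃ W.V) (hρ : W.IsAuto ρ) (a : Fin k)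
    (hrefl : ∀ s : Fin k, ρ (w s) = w (a - s)) :
    Multigraph.Iso (R.glue W u w) (R.glue W (fun i => u (Fin.rev i)) w) := by
  have hrotate (i : Fin k) : (ψ ^ (Fin.rev a).val) (u i) = u (Fin.rev (a - i)) := by
    open Fin.NatCast in
    rw [Equiv.Perm.pow_apply_of_apply_eq_add_one hrot, Fin.cast_val_eq_self, Fin.rev_sub, add_comm]
  exact Multigraph.glue_iso_glue (hψ.pow _) hρ (Equiv.subLeft a) hrotate hrefl

/-- if `W` admits a "reflection" automorphism on the border, then
flipping the rotor `R` yields an isomorphic graph. -/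
theorem stmt_10 {k : ℕ} [NeZero k] (R W : Multigraph)
    (u : Fin k → R.V) (w : Fin k → W.V)
    (hu : Function.Injective u) (hw : Function.Injective w)
    (hR : R.Connected)
    (ψ : R.V ≃ R.V) (hψ : R.IsAuto ψ) (hrot : ∀ i : Fin k, ψ (u i) = u (i + 1))
    (hWl : ∀ e : W.E, ¬ (W.ends e).IsDiag)
    (ρ : W.V ≃ W.V) (hρ : W.IsAuto ρ) (a : Fin k)
    (hrefl : ∀ s : Fin k, ρ (w s) = w (a - s)) :
    Multigraph.Iso (R.glue W u w) (R.glue W (fun i => u (Fin.rev i)) w) :=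
  stmt_10_general R W u w ψ hψ hrot ρ hρ a hrefl
end

section
/- Let G, H be connected loopless multigraphs with V(G) = {u_1,…,u_n}, V(H) = {v_1,…,v_n}, and edges e ∈ E(G) with endpoints u_{s1}, u_{s2} and f ∈ E(H) with endpoints v_{t1}, v_{t2}, such that u_i ↦ v_i is an isomorphism from G\e to H\f, and ψ is an isomorphism from G/e to H/f. Define the digraph D_ψ on vertex set [n] with an arc i → j iff: (a) i ∉ {s1,s2}, j ∉ {t1,t2}, and ψ(u_i) = v_j; or (b) i ∈ {s1,s2}, j ∉ {t1,t2}, and ψ of the merged vertex of e equals v_j; or (c) i ∉ {s1,s2}, j ∈ {t1,t2}, and ψ(u_i) is the merged vertex of f; or (d) i ∈ {s1,s2}, j ∈ {t1,t2}, and ψ maps the merged vertex of e to the merged vertex of f. Then for any directed cycle C of D_ψ: both s1 and s2 lie on C iff both t1 and t2 lie on C; and if both s1, s2 lie on C, then ψ maps the merged vertex of e to the merged vertex of f, and C contains the arcs s1 → t_j and s2 → t_{3−j} for some j ∈ {1,2}. -/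
open scoped BigOperators
open MvPolynomial

attribute [local instance] Classical.propDecidable

lemma cmk_eq_iff (G : Multigraph) (e : G.E) (a b : G.V) :
    G.cmk e a = G.cmk e b ↔ a = b ∨ (a ∈ G.ends e ∧ b ∈ G.ends e) := by
  constructor
  · intro h
    have h' : Relation.EqvGen (fun x y => x ∈ G.ends e ∧ y ∈ G.ends e) a b :=
      Quotient.exact h
    clear h
    induction h' with
    | rel _ _ h => exact Or.inr h
    | refl => exact Or.inl rfl
    | symm _ _ _ ih => tauto
    | trans x y z _ _ ih1 ih2 =>
        rcases ih1 with rfl | h1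
        · exact ih2
        · rcases ih2 with rfl | h2 <;> tauto
  · rintro (rfl | h)
    · rfl
    · exact Quotient.sound (Relation.EqvGen.rel _ _ h)

/-- properties of directed cycles of the digraph `D_ψ`.
An arc `i → j` of `D_ψ` means that `ψ` sends the image of `u i` in `G/e`
to the image of `v j` in `H/f` (this uniformly encodes the four cases
(a)–(d), since endpoints of `e` (resp. `f`) map to the merged vertex). -/
theorem stmt_13 (G H : Multigraph) {n : ℕ}
    (hGc : G.Connected) (hHc : H.Connected)
    (hGl : ∀ e : G.E, ¬ G.IsLoop e) (hHl : ∀ f : H.E, ¬ H.IsLoop f)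
    (u : Fin n → G.V) (v : Fin n → H.V)
    (hu : Function.Bijective u) (hv : Function.Bijective v)
    (e : G.E) (f : H.E) (s1 s2 t1 t2 : Fin n) (hs : s1 ≠ s2) (ht : t1 ≠ t2)
    (he : G.ends e = s(u s1, u s2)) (hf : H.ends f = s(v t1, v t2))
    (σ : G.V ≃ H.V) (hσu : ∀ i, σ (u i) = v i)
    (hσ : Multigraph.IsIsoMap (G.delete e) (H.delete f) σ)
    (ψ : (G.contract e).V ≃ (H.contract f).V)
    (hψ : Multigraph.IsIsoMap (G.contract e) (H.contract f) ψ)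
    {m : ℕ} [NeZero m] (c : Fin m → Fin n) (hcinj : Function.Injective c)
    (hcyc : ∀ l : Fin m, ψ (G.cmk e (u (c l))) = H.cmk f (v (c (l + 1)))) :
    ((((∃ l, c l = s1) ∧ ∃ l, c l = s2) ↔ ((∃ l, c l = t1) ∧ ∃ l, c l = t2)) ∧
      (((∃ l, c l = s1) ∧ ∃ l, c l = s2) →
        ψ (G.cmk e (u s1)) = H.cmk f (v t1) ∧
        ∃ p q : Fin n, ({p, q} : Finset (Fin n)) = {t1, t2} ∧
          (∃ l, c l = s1 ∧ c (l + 1) = p) ∧ ∃ l, c l = s2 ∧ c (l + 1) = q)) := by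
  classical
  have hG : ∀ i j : Fin n, G.cmk e (u i) = G.cmk e (u j) ↔
      (i = j ∨ ((i = s1 ∨ i = s2) ∧ (j = s1 ∨ j = s2))) := by
    intro i j
    rw [cmk_eq_iff, he]
    simp [Sym2.mem_iff, hu.injective.eq_iff]
  have hHc : ∀ i j : Fin n, H.cmk f (v i) = H.cmk f (v j) ↔
      (i = j ∨ ((i = t1 ∨ i = t2) ∧ (j = t1 ∨ j = t2))) := by
    intro i j
    rw [cmk_eq_iff, hf]
    simp [Sym2.mem_iff, hv.injective.eq_iff]
  have hmG : G.cmk e (u s1) = G.cmk e (u s2) :=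
    (hG _ _).2 (Or.inr ⟨Or.inl rfl, Or.inr rfl⟩)
  have hmH : H.cmk f (v t1) = H.cmk f (v t2) :=
    (hHc _ _).2 (Or.inr ⟨Or.inl rfl, Or.inr rfl⟩)
  obtain ⟨m, rfl⟩ : ∃ m', m = m' + 1 :=
    ⟨m - 1, (Nat.succ_pred_eq_of_pos (Nat.pos_of_ne_zero (NeZero.ne m))).symm⟩
  have hinj1 : ∀ l1 l2 : Fin (m + 1), l1 + 1 = l2 + 1 → l1 = l2 := by
    intro l1 l2 h
    have := congrArg (· - 1) h
    simpa using this
  have main : ((∃ l, c l = s1) ∧ ∃ l, c l = s2) →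
      ψ (G.cmk e (u s1)) = H.cmk f (v t1) ∧
      ∃ p q : Fin n, ({p, q} : Finset (Fin n)) = {t1, t2} ∧
        (∃ l, c l = s1 ∧ c (l + 1) = p) ∧ ∃ l, c l = s2 ∧ c (l + 1) = q := by
    rintro ⟨⟨l1, h1⟩, ⟨l2, h2⟩⟩
    have hl : l1 ≠ l2 := by rintro rfl; exact hs (h1.symm.trans h2)
    have H1 := hcyc l1; rw [h1] at H1
    have H2 := hcyc l2; rw [h2] at H2
    have heq : H.cmk f (v (c (l1 + 1))) = H.cmk f (v (c (l2 + 1))) := by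
      rw [← H1, ← H2, hmG]
    have hcne : c (l1 + 1) ≠ c (l2 + 1) := fun h => hl (hinj1 _ _ (hcinj h))
    rcases (hHc _ _).1 heq with h | ⟨ha, hb⟩
    · exact absurd h hcne
    have hpt1 : ψ (G.cmk e (u s1)) = H.cmk f (v t1) := by
      rw [H1]; exact (hHc _ _).2 (Or.inr ⟨ha, Or.inl rfl⟩)
    refine ⟨hpt1, c (l1 + 1), c (l2 + 1), ?_, ⟨l1, h1, rfl⟩, ⟨l2, h2, rfl⟩⟩
    rcases ha with ha | ha <;> rcases hb with hb | hb
    · exact absurd (ha.trans hb.symm) hcne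
    · rw [ha, hb]
    · rw [ha, hb]; exact Finset.pair_comm _ _
    · exact absurd (ha.trans hb.symm) hcne
  refine ⟨⟨fun h => ?_, fun h => ?_⟩, fun h => main h⟩
  · obtain ⟨_, p, q, hpq, ⟨l1, _, hp⟩, ⟨l2, _, hq⟩⟩ := main h
    have h1 : t1 = p ∨ t1 = q := by
      have : t1 ∈ ({p, q} : Finset (Fin n)) := by rw [hpq]; simp
      simpa using this
    have h2 : t2 = p ∨ t2 = q := by
      have : t2 ∈ ({p, q} : Finset (Fin n)) := by rw [hpq]; simp
      simpa using this
    constructor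
    · rcases h1 with rfl | rfl
      · exact ⟨l1 + 1, hp⟩
      · exact ⟨l2 + 1, hq⟩
    · rcases h2 with rfl | rfl
      · exact ⟨l1 + 1, hp⟩
      · exact ⟨l2 + 1, hq⟩
  · obtain ⟨⟨l1, h1⟩, ⟨l2, h2⟩⟩ := h
    have hl : l1 ≠ l2 := by rintro rfl; exact ht (h1.symm.trans h2)
    have H1 := hcyc (l1 - 1); rw [sub_add_cancel, h1] at H1
    have H2 := hcyc (l2 - 1); rw [sub_add_cancel, h2] at H2
    have heq : ψ (G.cmk e (u (c (l1 - 1)))) = ψ (G.cmk e (u (c (l2 - 1)))) := by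
      rw [H1, H2, hmH]
    have heq' := ψ.injective heq
    have hcne : c (l1 - 1) ≠ c (l2 - 1) := by
      intro h
      apply hl
      have h' := hcinj h
      have := congrArg (· + 1) h'
      simpa [sub_add_cancel] using this
    rcases (hG _ _).1 heq' with h | ⟨ha, hb⟩
    · exact absurd h hcne
    rcases ha with ha | ha <;> rcases hb with hb | hb
    · exact absurd (ha.trans hb.symm) hcne
    · exact ⟨⟨l1 - 1, ha⟩, ⟨l2 - 1, hb⟩⟩
    · exact ⟨⟨l2 - 1, hb⟩, ⟨l1 - 1, ha⟩⟩
    · exact absurd (ha.trans hb.symm) hcne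
end

section
/- Every partition of the set [r] with r ≤ 5 is setwise invariant under some reflection of the cyclic group Z/r, i.e., for every partition Q of Z/r with r ≤ 5 there exist b, b' such that the map i ↦ b + b' − i (mod r) permutes the blocks of Q. -/
open scoped BigOperators
open MvPolynomial

attribute [local instance] Classical.propDecidable

def F2 (a b : ZMod 2) : ZMod 2 → ZMod 2 := fun x => if x = 0 then a else b
def F3 (a b c : ZMod 3) : ZMod 3 → ZMod 3 := fun x =>
  if x = 0 then a else if x = 1 then b else c
def F4 (a b c d : ZMod 4) : ZMod 4 → ZMod 4 := fun x =>
  if x = 0 then a else if x = 1 then b else if x = 2 then c else d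
def F5 (a b c d e : ZMod 5) : ZMod 5 → ZMod 5 := fun x =>
  if x = 0 then a else if x = 1 then b else if x = 2 then c else if x = 3 then d else e

theorem aux2 : ∀ a b : ZMod 2, ∃ k : ZMod 2, ∀ i j : ZMod 2,
    F2 a b i = F2 a b j → F2 a b (k - i) = F2 a b (k - j) := by decide

theorem aux3 : ∀ a b c : ZMod 3, ∃ k : ZMod 3, ∀ i j : ZMod 3,
    F3 a b c i = F3 a b c j → F3 a b c (k - i) = F3 a b c (k - j) := by decide

theorem aux4 : ∀ a b c d : ZMod 4, ∃ k : ZMod 4, ∀ i j : ZMod 4,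
    F4 a b c d i = F4 a b c d j → F4 a b c d (k - i) = F4 a b c d (k - j) := by decide

set_option maxHeartbeats 4000000 in
theorem aux5 : ∀ b c d e : ZMod 5, ∃ k : ZMod 5, ∀ i j : ZMod 5,
    F5 0 b c d e i = F5 0 b c d e j → F5 0 b c d e (k - i) = F5 0 b c d e (k - j) := by decide

theorem repr2 (f : ZMod 2 → ZMod 2) (x : ZMod 2) : f x = F2 (f 0) (f 1) x := by
  have h : ∀ y : ZMod 2, y = 0 ∨ y = 1 := by decide
  rcases h x with rfl | rfl <;> simp [F2, show (1:ZMod 2) ≠ 0 by decide]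

theorem repr3 (f : ZMod 3 → ZMod 3) (x : ZMod 3) : f x = F3 (f 0) (f 1) (f 2) x := by
  have h : ∀ y : ZMod 3, y = 0 ∨ y = 1 ∨ y = 2 := by decide
  rcases h x with rfl | rfl | rfl <;>
    simp [F3, show (1:ZMod 3) ≠ 0 by decide, show (2:ZMod 3) ≠ 0 by decide,
      show (2:ZMod 3) ≠ 1 by decide]

theorem repr4 (f : ZMod 4 → ZMod 4) (x : ZMod 4) : f x = F4 (f 0) (f 1) (f 2) (f 3) x := by
  have h : ∀ y : ZMod 4, y = 0 ∨ y = 1 ∨ y = 2 ∨ y = 3 := by decide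
  rcases h x with rfl | rfl | rfl | rfl <;>
    simp [F4, show (1:ZMod 4) ≠ 0 by decide, show (2:ZMod 4) ≠ 0 by decide,
      show (2:ZMod 4) ≠ 1 by decide, show (3:ZMod 4) ≠ 0 by decide,
      show (3:ZMod 4) ≠ 1 by decide, show (3:ZMod 4) ≠ 2 by decide]

theorem repr5 (f : ZMod 5 → ZMod 5) (x : ZMod 5) :
    f x = F5 (f 0) (f 1) (f 2) (f 3) (f 4) x := by
  have h : ∀ y : ZMod 5, y = 0 ∨ y = 1 ∨ y = 2 ∨ y = 3 ∨ y = 4 := by decide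
  rcases h x with rfl | rfl | rfl | rfl | rfl <;>
    simp [F5, show (1:ZMod 5) ≠ 0 by decide, show (2:ZMod 5) ≠ 0 by decide,
      show (2:ZMod 5) ≠ 1 by decide, show (3:ZMod 5) ≠ 0 by decide, show (3:ZMod 5) ≠ 1 by decide,
      show (3:ZMod 5) ≠ 2 by decide, show (4:ZMod 5) ≠ 0 by decide, show (4:ZMod 5) ≠ 1 by decide,
      show (4:ZMod 5) ≠ 2 by decide, show (4:ZMod 5) ≠ 3 by decide]

theorem key1 (f : ZMod 1 → ZMod 1) :
    ∃ c : ZMod 1, ∀ i j, f i = f j → f (c - i) = f (c - j) :=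
  ⟨0, fun i j _ => congrArg f (Subsingleton.elim _ _)⟩

theorem key2 (f : ZMod 2 → ZMod 2) :
    ∃ c : ZMod 2, ∀ i j, f i = f j → f (c - i) = f (c - j) := by
  obtain ⟨k, hk⟩ := aux2 (f 0) (f 1)
  refine ⟨k, fun i j h => ?_⟩
  rw [repr2 f (k - i), repr2 f (k - j)]
  exact hk i j (by rw [← repr2, ← repr2]; exact h)

theorem key3 (f : ZMod 3 → ZMod 3) :
    ∃ c : ZMod 3, ∀ i j, f i = f j → f (c - i) = f (c - j) := by
  obtain ⟨k, hk⟩ := aux3 (f 0) (f 1) (f 2)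
  refine ⟨k, fun i j h => ?_⟩
  rw [repr3 f (k - i), repr3 f (k - j)]
  exact hk i j (by rw [← repr3, ← repr3]; exact h)

theorem key4 (f : ZMod 4 → ZMod 4) :
    ∃ c : ZMod 4, ∀ i j, f i = f j → f (c - i) = f (c - j) := by
  obtain ⟨k, hk⟩ := aux4 (f 0) (f 1) (f 2) (f 3)
  refine ⟨k, fun i j h => ?_⟩
  rw [repr4 f (k - i), repr4 f (k - j)]
  exact hk i j (by rw [← repr4, ← repr4]; exact h)

theorem key5 (f : ZMod 5 → ZMod 5) :
    ∃ c : ZMod 5, ∀ i j, f i = f j → f (c - i) = f (c - j) := by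
  set σ := Equiv.swap (f 0) 0 with hσ
  set g : ZMod 5 → ZMod 5 := fun x => σ (f x) with hg
  have hg0 : g 0 = 0 := Equiv.swap_apply_left _ _
  have hrep : ∀ x, g x = F5 0 (g 1) (g 2) (g 3) (g 4) x := by
    intro x
    rw [show (0 : ZMod 5) = g 0 from hg0.symm]  -- careful
    exact repr5 g x
  obtain ⟨k, hk⟩ := aux5 (g 1) (g 2) (g 3) (g 4)
  refine ⟨k, fun i j h => ?_⟩
  have h1 : g i = g j := congrArg σ h
  have h2 := hk i j (by rw [← hrep, ← hrep]; exact h1)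
  rw [← hrep, ← hrep] at h2
  exact σ.injective h2


theorem keyZ (r : ℕ) [NeZero r] (hr : r ≤ 5) (f : ZMod r → ZMod r) :
    ∃ c : ZMod r, ∀ i j, f i = f j → f (c - i) = f (c - j) := by
  have h1 : 0 < r := Nat.pos_of_ne_zero (NeZero.ne r)
  interval_cases r
  · exact key1 f
  · exact key2 f
  · exact key3 f
  · exact key4 f
  · exact key5 f

noncomputable def sAux {r : ℕ} [NeZero r] {β : Type} (f : ZMod r → β) (i : ZMod r) :
    Finset ℕ :=
  (Finset.univ.filter fun j => f j = f i).image ZMod.val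

theorem sAux_ne {r : ℕ} [NeZero r] {β : Type} (f : ZMod r → β) (i : ZMod r) :
    (sAux f i).Nonempty :=
  ⟨i.val, Finset.mem_image.mpr ⟨i, Finset.mem_filter.mpr ⟨Finset.mem_univ i, rfl⟩, rfl⟩⟩

noncomputable def gAux {r : ℕ} [NeZero r] {β : Type} (f : ZMod r → β) (i : ZMod r) :
    ZMod r :=
  (((sAux f i).min' (sAux_ne f i) : ℕ) : ZMod r)

theorem gAux_mem {r : ℕ} [NeZero r] {β : Type} (f : ZMod r → β) (i : ZMod r) :
    gAux f i ∈ Finset.univ.filter fun j => f j = f i := by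
  obtain ⟨j, hj, hval⟩ := Finset.mem_image.mp ((sAux f i).min'_mem (sAux_ne f i))
  have hgj : gAux f i = j := by
    rw [gAux, ← hval]
    exact ZMod.natCast_rightInverse j
  rw [hgj]; exact hj

theorem gAux_f {r : ℕ} [NeZero r] {β : Type} (f : ZMod r → β) (i : ZMod r) :
    f (gAux f i) = f i := (Finset.mem_filter.mp (gAux_mem f i)).2

theorem gAux_congr {r : ℕ} [NeZero r] {β : Type} (f : ZMod r → β) {i j : ZMod r}
    (h : f i = f j) : gAux f i = gAux f j := by
  have hst : sAux f i = sAux f j := by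
    ext k; simp [sAux, h]
  rw [gAux, gAux]
  congr 1
  apply le_antisymm
  · apply Finset.min'_le
    rw [hst]
    exact Finset.min'_mem _ (sAux_ne f j)
  · apply Finset.min'_le
    rw [← hst]
    exact Finset.min'_mem _ (sAux_ne f i)

theorem keyGen (r : ℕ) [NeZero r] (hr : r ≤ 5) {β : Type} (f : ZMod r → β) :
    ∃ c : ZMod r, ∀ i j, f i = f j → f (c - i) = f (c - j) := by
  obtain ⟨c, hc⟩ := keyZ r hr (gAux f)
  refine ⟨c, fun i j h => ?_⟩
  have h2 := hc i j (gAux_congr f h)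
  rw [← gAux_f f (c - i), ← gAux_f f (c - j), h2]


/-- for `r ≤ 5`, every partition of `ℤ/r` is setwise invariant
under some reflection `i ↦ b + b' − i`. -/
theorem stmt_19 (r : ℕ) [NeZero r] (hr : r ≤ 5)
    (Q : Finset (Finset (ZMod r))) (hQ : IsPartitionUniv Q) :
    ∃ b b' : ZMod r, ∀ B ∈ Q, B.image (fun i => b + b' - i) ∈ Q := by
  classical
  obtain ⟨hQne, hQuniq⟩ := hQ
  have hspec : ∀ i : ZMod r, ((hQuniq i).choose ∈ Q ∧ i ∈ (hQuniq i).choose) ∧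
      ∀ B, B ∈ Q ∧ i ∈ B → B = (hQuniq i).choose := fun i => (hQuniq i).choose_spec
  set fB : ZMod r → Finset (ZMod r) := fun i => (hQuniq i).choose with hfBdef
  have hfB : ∀ {i : ZMod r} {B : Finset (ZMod r)}, B ∈ Q → i ∈ B → fB i = B :=
    fun {i B} h1 h2 => ((hspec i).2 B ⟨h1, h2⟩).symm
  obtain ⟨c, hc⟩ := keyGen r hr fB
  refine ⟨c, 0, fun B hB => ?_⟩
  obtain ⟨i₀, hi₀⟩ := hQne B hB
  have himg : B.image (fun i => c + 0 - i) = fB (c - i₀) := by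
    apply Finset.Subset.antisymm
    · intro x hx
      obtain ⟨i, hi, rfl⟩ := Finset.mem_image.mp hx
      have h1 : fB i = fB i₀ := by rw [hfB hB hi, hfB hB hi₀]
      have h2 := hc i i₀ h1
      have h3 : c + 0 - i ∈ fB (c - i) := by rw [add_zero]; exact (hspec (c - i)).1.2
      rw [h2] at h3
      exact h3
    · intro y hy
      have h1 : fB y = fB (c - i₀) := hfB (hspec (c - i₀)).1.1 hy
      have h2 := hc y (c - i₀) h1
      have h3 : fB (c - (c - i₀)) = B := by rw [sub_sub_cancel]; exact hfB hB hi₀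
      have h4 : c - y ∈ B := by rw [← h3, ← h2]; exact (hspec (c - y)).1.2
      exact Finset.mem_image.mpr ⟨c - y, h4, by rw [add_zero, sub_sub_cancel]⟩
  rw [himg]
  exact (hspec (c - i₀)).1.1
end
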